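/- arXiv:1711.03064 — 4 statements merged into one kernel-verified Lean document; each statement's English description precedes it below -/
import Mathlib

section
/- Let C be a 2p×2p complex matrix that is positive definite and J-unitary with respect to j = diag(I_p, -I_p), i.e. C > 0 and C j C = j. Then C admits a representation C = D·F where F = [[I_p, ρ],[ρ*, I_p]], D = diag((I_p - ρρ*)^{-1/2}, (I_p - ρ*ρ)^{-1/2}), for some p×p matrix ρ with ρ*ρ < I_p (operator norm of ρ strictly less than 1). -/
open Matrix
open scoped ComplexOrder

noncomputable section

/-- The 2p×2p signature matrix j = diag(I_p, -I_p). -/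
def jmat (p : ℕ) : Matrix (Fin p ⊕ Fin p) (Fin p ⊕ Fin p) ℂ :=
  Matrix.fromBlocks 1 0 0 (-1)

/-! Write `C = [[A, B], [Bᴴ, E]]`; the diagonal blocks `A`, `E` are positive definite. In blocks,
`C j C = j` reads `A² - BBᴴ = 1`, `AB = BE`, `E² - BᴴB = 1`. For `ρ = A⁻¹B = BE⁻¹` this gives
`1 - ρρᴴ = A⁻²`, `1 - ρᴴρ = E⁻²` and `C = diag(A, E) · [[1, ρ], [ρᴴ, 1]]`, so `d₁ = A`, `d₂ = E`. -/

namespace Matrix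

variable {m n : Type*}

theorem PosDef.toBlocks₁₁ {R : Type*} [CommRing R] [PartialOrder R] [StarRing R]
    {C : Matrix (m ⊕ n) (m ⊕ n) R} (hC : C.PosDef) : C.toBlocks₁₁.PosDef :=
  hC.submatrix Sum.inl_injective

theorem PosDef.toBlocks₂₂ {R : Type*} [CommRing R] [PartialOrder R] [StarRing R]
    {C : Matrix (m ⊕ n) (m ⊕ n) R} (hC : C.PosDef) : C.toBlocks₂₂.PosDef :=
  hC.submatrix Sum.inr_injective

theorem PosDef.mul_self {K : Type*} [Field K] [PartialOrder K] [StarRing K] [StarOrderedRing K]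
    [Fintype n] [DecidableEq n] {M : Matrix n n K} (hM : M.PosDef) : (M * M).PosDef := by
  have := (hM.isUnit.posDef_star_left_conjugate_iff (x := 1)).mpr .one
  rwa [star_eq_conjTranspose, hM.isHermitian.eq, Matrix.mul_one] at this

theorem IsHermitian.eq_fromBlocks {α : Type*} [Star α] {C : Matrix (m ⊕ n) (m ⊕ n) α}
    (hC : C.IsHermitian) :
    C = Matrix.fromBlocks C.toBlocks₁₁ C.toBlocks₁₂ C.toBlocks₁₂ᴴ C.toBlocks₂₂ := by
  nth_rw 1 [← fromBlocks_toBlocks C]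
  congr
  nth_rw 1 [← hC]
  rfl

theorem fromBlocks_mul_signature_mul_self_eq_signature_iff {α : Type*} [Ring α]
    [Fintype m] [Fintype n] [DecidableEq m] [DecidableEq n]
    {A : Matrix m m α} {B : Matrix m n α} {C : Matrix n m α} {D : Matrix n n α} :
    fromBlocks A B C D * fromBlocks 1 0 0 (-1) * fromBlocks A B C D = fromBlocks 1 0 0 (-1) ↔
      A * A - B * C = 1 ∧ A * B = B * D ∧ C * A = D * C ∧ D * D - C * B = 1 := by
  simp only [fromBlocks_multiply, fromBlocks_inj, Matrix.mul_one, Matrix.mul_zero, Matrix.mul_neg,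
    Matrix.neg_mul, add_zero, zero_add]
  simp only [← sub_eq_add_neg, sub_eq_zero]
  rw [← neg_sub (D * D), neg_inj]

variable {α : Type*} [CommRing α] [Fintype m] [Fintype n] [DecidableEq m]

theorem inv_mul_eq_mul_inv_of_mul_eq [DecidableEq n] {A : Matrix m m α} {B : Matrix m n α}
    {E : Matrix n n α} (hA : IsUnit A.det) (hE : IsUnit E.det) (h : A * B = B * E) :
    A⁻¹ * B = B * E⁻¹ := by
  calc A⁻¹ * B = A⁻¹ * (B * E * E⁻¹) := by rw [mul_nonsing_inv_cancel_right _ _ hE]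
    _ = B * E⁻¹ := by rw [← h, Matrix.mul_assoc, nonsing_inv_mul_cancel_left _ _ hA]

variable [StarRing α]

theorem one_sub_inv_mul_mul_conjTranspose {A : Matrix m m α} {B : Matrix m n α}
    (hA : A.IsHermitian) (hAu : IsUnit A.det) (h : A * A - B * Bᴴ = 1) :
    1 - A⁻¹ * B * (A⁻¹ * B)ᴴ = (A * A)⁻¹ := by
  have hBB : B * Bᴴ = A * A - 1 := by rw [← h, sub_sub_cancel]
  rw [conjTranspose_mul, conjTranspose_nonsing_inv, hA.eq, Matrix.mul_assoc, ← Matrix.mul_assoc B,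
    hBB, Matrix.sub_mul, Matrix.one_mul, mul_nonsing_inv_cancel_right _ _ hAu, Matrix.mul_sub,
    nonsing_inv_mul _ hAu, sub_sub_cancel, Matrix.mul_inv_rev]

theorem conjTranspose_inv_mul_eq_inv_mul_conjTranspose [DecidableEq n] {A : Matrix m m α}
    {B : Matrix m n α} {E : Matrix n n α} (hAu : IsUnit A.det) (hE : E.IsHermitian)
    (hEu : IsUnit E.det) (h : A * B = B * E) : (A⁻¹ * B)ᴴ = E⁻¹ * Bᴴ := by
  rw [inv_mul_eq_mul_inv_of_mul_eq hAu hEu h, conjTranspose_mul, conjTranspose_nonsing_inv, hE.eq]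

theorem fromBlocks_mul_fromBlocks_one_inv_mul [DecidableEq n] {A : Matrix m m α}
    {B : Matrix m n α} {E : Matrix n n α} (hAu : IsUnit A.det) (hE : E.IsHermitian)
    (hEu : IsUnit E.det) (h : A * B = B * E) :
    fromBlocks A 0 0 E * fromBlocks 1 (A⁻¹ * B) (A⁻¹ * B)ᴴ 1 = fromBlocks A B Bᴴ E := by
  rw [conjTranspose_inv_mul_eq_inv_mul_conjTranspose hAu hE hEu h, fromBlocks_multiply,
    mul_nonsing_inv_cancel_left _ _ hAu, mul_nonsing_inv_cancel_left _ _ hEu]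
  simp

end Matrix

theorem posdef_junitary_halmos_representation_general (p : ℕ)
    (C : Matrix (Fin p ⊕ Fin p) (Fin p ⊕ Fin p) ℂ)
    (hC : C.PosDef) (hCjC : C * jmat p * C = jmat p) :
    ∃ (ρ d₁ d₂ : Matrix (Fin p) (Fin p) ℂ),
      (1 - ρᴴ * ρ).PosDef ∧
      d₁.PosDef ∧ d₂.PosDef ∧
      d₁ * d₁ = (1 - ρ * ρᴴ)⁻¹ ∧
      d₂ * d₂ = (1 - ρᴴ * ρ)⁻¹ ∧
      C = Matrix.fromBlocks d₁ 0 0 d₂ * Matrix.fromBlocks 1 ρ ρᴴ 1 := by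
  set A := C.toBlocks₁₁
  set B := C.toBlocks₁₂
  set E := C.toBlocks₂₂
  have hA : A.PosDef := hC.toBlocks₁₁
  have hE : E.PosDef := hC.toBlocks₂₂
  have hAu : IsUnit A.det := (isUnit_iff_isUnit_det A).mp hA.isUnit
  have hEu : IsUnit E.det := (isUnit_iff_isUnit_det E).mp hE.isUnit
  have hblocks : C = fromBlocks A B Bᴴ E := hC.isHermitian.eq_fromBlocks
  rw [hblocks, jmat, fromBlocks_mul_signature_mul_self_eq_signature_iff] at hCjC
  obtain ⟨hAB, hABE, -, hEB⟩ := hCjC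
  have hρρH : 1 - A⁻¹ * B * (A⁻¹ * B)ᴴ = (A * A)⁻¹ :=
    one_sub_inv_mul_mul_conjTranspose hA.isHermitian hAu hAB
  have hρHρ : 1 - (A⁻¹ * B)ᴴ * (A⁻¹ * B) = (E * E)⁻¹ := by
    have := one_sub_inv_mul_mul_conjTranspose hE.isHermitian hEu (B := Bᴴ)
      (by rw [conjTranspose_conjTranspose]; exact hEB)
    rwa [← conjTranspose_inv_mul_eq_inv_mul_conjTranspose hAu hE.isHermitian hEu hABE,
      conjTranspose_conjTranspose] at this
  refine ⟨A⁻¹ * B, A, E, hρHρ ▸ hE.mul_self.inv, hA, hE, ?_, ?_, ?_⟩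
  · rw [hρρH, nonsing_inv_nonsing_inv _ (by rw [det_mul]; exact hAu.mul hAu)]
  · rw [hρHρ, nonsing_inv_nonsing_inv _ (by rw [det_mul]; exact hEu.mul hEu)]
  · rw [fromBlocks_mul_fromBlocks_one_inv_mul hAu hE.isHermitian hEu hABE, ← hblocks]

/-- a positive definite j-unitary matrix C admits the Halmos-type
representation C = D·F with F = [[I, ρ],[ρ*, I]],
D = diag((I - ρρ*)^{-1/2}, (I - ρ*ρ)^{-1/2}) for some ρ with ρ*ρ < I. -/
theorem posdef_junitary_halmos_representation (p : ℕ) (hp : 0 < p)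
    (C : Matrix (Fin p ⊕ Fin p) (Fin p ⊕ Fin p) ℂ)
    (hC : C.PosDef) (hCjC : C * jmat p * C = jmat p) :
    ∃ (ρ d₁ d₂ : Matrix (Fin p) (Fin p) ℂ),
      (1 - ρᴴ * ρ).PosDef ∧
      d₁.PosDef ∧ d₂.PosDef ∧
      d₁ * d₁ = (1 - ρ * ρᴴ)⁻¹ ∧
      d₂ * d₂ = (1 - ρᴴ * ρ)⁻¹ ∧
      C = Matrix.fromBlocks d₁ 0 0 d₂ * Matrix.fromBlocks 1 ρ ρᴴ 1 :=
  posdef_junitary_halmos_representation_general p C hC hCjC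
end
end

section
/- Let S be an n×n block matrix with p×p blocks, S = {s_{j-i}}_{i,j=1}^n, a self-adjoint block Toeplitz matrix (s_{-k} = s_k*). Define A = {a_{j-i}}_{i,j=0}^{n-1} with a_k = 0 for k>0, a_0 = (i/2)I_p, a_k = i·I_p for k<0, Φ1 the np×p block column of identities I_p, Φ2 the block column with r-th block s_0/2 + s_{-1} + ... + s_{1-r} (plus i·Φ1·ν for a self-adjoint p×p matrix ν), Π = [Φ1, Φ2], and J = [[0,I_p],[I_p,0]]. Then the identity A S - S A* = i Π J Π* holds. -/
/-!
View all matrices as `n × n` matrices whose entries are `p × p` blocks; `Matrix.comp` identifies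
these with `np × np` matrices compatibly with products and adjoints. As `A` is lower triangular
with `i/2` on the diagonal and `i` below it, the `(i, j)` block of `A S - S A*` is
`i (s_{j-i} + ∑_{k<i} s_{j-k} + ∑_{k<j} s_{k-i})`, that is `i` times the sum of `s` over the
integer interval `[-i, j]`. The `(i, j)` block of `Π J Π*` is `φ_i + φ_j*`, where `φ_r` is the
`r`-th block of `Φ₂`; using `s_{-k} = s_k*` and `ν = ν*`, the `ν` terms cancel and what remains
is the same interval sum, split as `s_0 + ∑_{-i ≤ k < 0} s_k + ∑_{0 < k ≤ j} s_k`.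
-/

open Matrix
open scoped ComplexOrder

noncomputable section

/-- The 2p×2p matrix J = [[0, I_p],[I_p, 0]]. -/
def Jmat (p : ℕ) : Matrix (Fin p ⊕ Fin p) (Fin p ⊕ Fin p) ℂ :=
  Matrix.fromBlocks 0 1 1 0

/-- The block coefficients a_k of the matrix A:
a_k = 0 for k > 0, a_0 = (i/2)I_p, a_k = i I_p for k < 0. -/
def acoef (p : ℕ) (k : ℤ) : Matrix (Fin p) (Fin p) ℂ :=
  if 0 < k then 0 else if k = 0 then (Complex.I / 2) • 1 else Complex.I • 1

/-- Both sides are the sum of `F` over the integer interval `[-i, j]`. -/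
theorem sum_range_succ_sub_add_sum_range_sub {M : Type*} [AddCommGroup M] (F : ℤ → M)
    (i j : ℕ) :
    ∑ k ∈ Finset.range (i + 1), F (j - k) + ∑ k ∈ Finset.range j, F (k - i) =
      F 0 + ∑ k ∈ Finset.range i, F (-(k + 1)) + ∑ k ∈ Finset.range j, F (k + 1) := by
  induction j with
  | zero =>
    rw [Finset.sum_range_succ']
    simp [add_comm]
  | succ j ih =>
    have shift : ∑ k ∈ Finset.range (i + 1), F ((j + 1 : ℕ) - k) =
        F (j + 1) + ∑ k ∈ Finset.range (i + 1), F (j - k) - F (j - i) := by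
      rw [Finset.sum_range_succ' _ i, Finset.sum_range_succ _ i]
      push_cast
      simp only [add_sub_add_right_eq_sub, sub_zero]
      abel
    rw [shift, Finset.sum_range_succ (fun k : ℕ => F (k - i)),
      Finset.sum_range_succ (fun k : ℕ => F (k + 1)), ← add_assoc (F 0 + _), ← ih]
    abel

section BlockMatrices

variable {ι κ μ α : Type*}

def blockToeplitz (n : ℕ) (s : ℤ → α) : Matrix (Fin n) (Fin n) α :=
  of fun i j => s (j - i)

def blockCol (x : ι → Matrix κ μ α) : Matrix (ι × κ) μ α :=
  of fun ia b => x ia.1 ia.2 b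

theorem comp_mul [Fintype ι] [Fintype κ] [NonUnitalNonAssocSemiring α]
    (M N : Matrix ι ι (Matrix κ κ α)) :
    comp ι ι κ κ α (M * N) = comp ι ι κ κ α M * comp ι ι κ κ α N :=
  map_mul (compRingEquiv ι κ α) M N

theorem comp_conjTranspose [Star α] (M : Matrix ι ι (Matrix κ κ α)) :
    (comp ι ι κ κ α M)ᴴ = comp ι ι κ κ α Mᴴ :=
  rfl

theorem blockCol_mul [Fintype μ] [NonUnitalNonAssocSemiring α] {o : Type*}
    (x : ι → Matrix κ μ α) (M : Matrix μ o α) :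
    blockCol x * M = blockCol fun i => x i * M :=
  rfl

theorem blockCol_mul_conjTranspose [Fintype μ] [NonUnitalNonAssocSemiring α] [StarRing α]
    (x y : ι → Matrix κ μ α) :
    blockCol x * (blockCol y)ᴴ = comp ι ι κ κ α (of fun i j => x i * (y j)ᴴ) :=
  rfl

theorem blockCol_mul_conjTranspose_one_add [Fintype κ] [DecidableEq κ] [Semiring α]
    [StarRing α] (x : ι → Matrix κ κ α) :
    blockCol x * (blockCol fun _ : ι => (1 : Matrix κ κ α))ᴴ +
      (blockCol fun _ : ι => (1 : Matrix κ κ α)) * (blockCol x)ᴴ =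
      comp ι ι κ κ α (of fun i j => x i + (x j)ᴴ) := by
  rw [blockCol_mul_conjTranspose, blockCol_mul_conjTranspose]
  simp only [conjTranspose_one, mul_one, one_mul]
  rfl

end BlockMatrices

theorem fromCols_mul_Jmat_mul_conjTranspose {m : Type*} {p : ℕ} (X Y : Matrix m (Fin p) ℂ) :
    fromCols X Y * Jmat p * (fromCols X Y)ᴴ = Y * Xᴴ + X * Yᴴ := by
  rw [Jmat, fromCols_mul_fromBlocks, conjTranspose_fromCols_eq_fromRows_conjTranspose,
    fromCols_mul_fromRows]
  simp

open Complex

theorem acoef_of_pos {p : ℕ} {k : ℤ} (hk : 0 < k) : acoef p k = 0 :=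
  if_pos hk

theorem acoef_zero (p : ℕ) : acoef p 0 = (I / 2) • 1 := by
  simp [acoef]

theorem acoef_of_neg {p : ℕ} {k : ℤ} (hk : k < 0) : acoef p k = I • 1 := by
  rw [acoef, if_neg hk.not_gt, if_neg hk.ne]

theorem sum_acoef_mul {n p : ℕ} {m : Type*} (i : Fin n) (g : ℕ → Matrix (Fin p) m ℂ) :
    ∑ k : Fin n, acoef p (k - i) * g k =
      (I / 2) • g i + I • ∑ k ∈ Finset.range i, g k := by
  rw [Fin.sum_univ_eq_sum_range (fun k : ℕ => acoef p (k - i) * g k),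
    ← Finset.sum_subset (Finset.range_subset_range.mpr i.isLt), Finset.sum_range_succ, add_comm,
    Finset.smul_sum]
  · simp only [sub_self, acoef_zero, Matrix.smul_mul, Matrix.one_mul]
    congr 1
    refine Finset.sum_congr rfl fun k hk => ?_
    rw [acoef_of_neg (by simp only [Finset.mem_range] at hk; omega), Matrix.smul_mul,
      Matrix.one_mul]
  · intro k _ hk
    rw [acoef_of_pos (by simp only [Finset.mem_range] at hk; omega), Matrix.zero_mul]

theorem sum_mul_conjTranspose_acoef {n p : ℕ} {m : Type*} (j : Fin n)
    (g : ℕ → Matrix m (Fin p) ℂ) :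
    ∑ k : Fin n, g k * (acoef p (k - j))ᴴ =
      -((I / 2) • g j + I • ∑ k ∈ Finset.range j, g k) := by
  have h := congrArg conjTranspose (sum_acoef_mul j fun k => (g k)ᴴ)
  simp only [conjTranspose_sum, conjTranspose_mul, conjTranspose_conjTranspose, conjTranspose_add,
    conjTranspose_smul] at h
  rw [h]
  simp only [star_div₀, RCLike.star_def, conj_I, star_ofNat, neg_div, neg_smul, neg_add_rev]
  module

def phi2Block {p : ℕ} (s : ℤ → Matrix (Fin p) (Fin p) ℂ) (ν : Matrix (Fin p) (Fin p) ℂ)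
    (r : ℕ) : Matrix (Fin p) (Fin p) ℂ :=
  (2 : ℂ)⁻¹ • s 0 + ∑ l ∈ Finset.range r, s (-((l : ℤ) + 1)) + I • ν

theorem phi2Block_add_conjTranspose {p : ℕ} {s : ℤ → Matrix (Fin p) (Fin p) ℂ}
    (hs : ∀ k : ℤ, s (-k) = (s k)ᴴ) {ν : Matrix (Fin p) (Fin p) ℂ} (hν : νᴴ = ν)
    (r t : ℕ) :
    phi2Block s ν r + (phi2Block s ν t)ᴴ =
      s 0 + ∑ k ∈ Finset.range r, s (-(k + 1)) + ∑ k ∈ Finset.range t, s (k + 1) := by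
  have h0 : (s 0)ᴴ = s 0 := by simpa using (hs 0).symm
  have hneg (k : ℤ) : (s (-k))ᴴ = s k := by rw [hs, conjTranspose_conjTranspose]
  simp only [phi2Block, conjTranspose_add, conjTranspose_smul, conjTranspose_sum, h0, hneg, hν]
  simp only [neg_add_rev, star_inv₀, star_ofNat, RCLike.star_def, conj_I, neg_smul]
  module

theorem blockToeplitz_acoef_commutator {n p : ℕ} {s : ℤ → Matrix (Fin p) (Fin p) ℂ}
    (hs : ∀ k : ℤ, s (-k) = (s k)ᴴ) {ν : Matrix (Fin p) (Fin p) ℂ} (hν : νᴴ = ν) :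
    blockToeplitz n (acoef p) * blockToeplitz n s -
        blockToeplitz n s * (blockToeplitz n (acoef p))ᴴ =
      of fun i j : Fin n => I • (phi2Block s ν i + (phi2Block s ν j)ᴴ) := by
  ext i j : 1
  simp only [Matrix.sub_apply, mul_apply, blockToeplitz, of_apply, conjTranspose_apply,
    star_eq_conjTranspose]
  rw [sum_acoef_mul i fun k : ℕ => s (j - k),
    sum_mul_conjTranspose_acoef j fun k : ℕ => s (k - i), phi2Block_add_conjTranspose hs hν,
    ← sum_range_succ_sub_add_sum_range_sub, Finset.sum_range_succ]
  module

/-- the operator identity A S - S A* = i Π J Π* for a self-adjoint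
block Toeplitz matrix S = {s_{j-i}}. -/
theorem toeplitz_operator_identity (n p : ℕ)
    (s : ℤ → Matrix (Fin p) (Fin p) ℂ)
    (hs : ∀ k : ℤ, s (-k) = (s k)ᴴ)
    (ν : Matrix (Fin p) (Fin p) ℂ) (hν : νᴴ = ν)
    (S A : Matrix (Fin n × Fin p) (Fin n × Fin p) ℂ)
    (hS : ∀ i j : Fin n, ∀ a b : Fin p, S (i, a) (j, b) = s ((j : ℤ) - (i : ℤ)) a b)
    (hA : ∀ i j : Fin n, ∀ a b : Fin p, A (i, a) (j, b) = acoef p ((j : ℤ) - (i : ℤ)) a b)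
    (Φ₁ Φ₂ : Matrix (Fin n × Fin p) (Fin p) ℂ)
    (hΦ₁ : ∀ i : Fin n, ∀ a b : Fin p, Φ₁ (i, a) b = (1 : Matrix (Fin p) (Fin p) ℂ) a b)
    (hΦ₂ : ∀ i : Fin n, ∀ a b : Fin p, Φ₂ (i, a) b =
      ((2 : ℂ)⁻¹ • s 0 + ∑ l ∈ Finset.range (i : ℕ), s (-((l : ℤ) + 1))) a b
        + (Complex.I • (Φ₁ * ν)) (i, a) b)
    (Pmat : Matrix (Fin n × Fin p) (Fin p ⊕ Fin p) ℂ)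
    (hPmat : Pmat = Matrix.fromCols Φ₁ Φ₂) :
    A * S - S * Aᴴ = Complex.I • (Pmat * Jmat p * Pmatᴴ) := by
  have hS_comp : S = comp _ _ _ _ _ (blockToeplitz n s) := by
    ext ⟨i, a⟩ ⟨j, b⟩
    exact hS i j a b
  have hA_comp : A = comp _ _ _ _ _ (blockToeplitz n (acoef p)) := by
    ext ⟨i, a⟩ ⟨j, b⟩
    exact hA i j a b
  have hΦ₁_col : Φ₁ = blockCol fun _ : Fin n => (1 : Matrix (Fin p) (Fin p) ℂ) := by
    ext ⟨i, a⟩ b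
    exact hΦ₁ i a b
  have hΦ₂_col : Φ₂ = blockCol fun i : Fin n => phi2Block s ν i := by
    ext ⟨i, a⟩ b
    rw [hΦ₂, hΦ₁_col, blockCol_mul]
    simp [blockCol, phi2Block]
  rw [hPmat, fromCols_mul_Jmat_mul_conjTranspose, hΦ₁_col, hΦ₂_col,
    blockCol_mul_conjTranspose_one_add, hS_comp, hA_comp, comp_conjTranspose, ← comp_mul,
    ← comp_mul]
  -- `comp` commutes with `-` and `I •` definitionally.
  exact congrArg (comp _ _ _ _ _) (blockToeplitz_acoef_commutator hs hν)
end
end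

section
/- Let H(n) > 0 be a positive-definite block Hankel matrix with p×p blocks, T(m) = H(m)^{-1}, P_2 the p×np block row (0,...,0,I_p), Π(k) = [Φ1(k), Φ2(k)] as in the Hankel setting, and ω_k := P_2 T(k+1) Π(k+1) for 0 ≤ k < n. Then ω_k J ω_k* = 0 for all 0 < k < n, where J = [[0,I_p],[I_p,0]]. -/
/-!
With `m = k + 1`, `H = H(m)` and `T = H⁻¹`, the displacement identity `A H - H A* = i Π J Π*`
gives `i · ω_k J ω_k* = P₂ T (A H - H A*) T P₂* = P₂ T A P₂* - P₂ A* T P₂*`.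
Both terms vanish because `A P₂* = 0`: the block shift pushes the last block row out.
-/

open Matrix
open scoped ComplexOrder

noncomputable section

/-- The m×m block Hankel matrix H(m) = {H_{i+j-2}}_{i,j=1}^m built from the
p×p blocks `Hk 0, Hk 1, ...`. -/
def Hmat (p : ℕ) (Hk : ℕ → Matrix (Fin p) (Fin p) ℂ) (m : ℕ) :
    Matrix (Fin m × Fin p) (Fin m × Fin p) ℂ :=
  fun x y => Hk ((x.1 : ℕ) + (y.1 : ℕ)) x.2 y.2

/-- The block lower shift matrix A (I_p on the block subdiagonal). -/
def Amat (p m : ℕ) : Matrix (Fin m × Fin p) (Fin m × Fin p) ℂ :=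
  fun x y => if (x.1 : ℕ) = (y.1 : ℕ) + 1 ∧ x.2 = y.2 then 1 else 0

/-- Φ₁(m) = -i · col(0, H_0, H_1, ..., H_{m-2}). -/
def Phi1 (p : ℕ) (Hk : ℕ → Matrix (Fin p) (Fin p) ℂ) (m : ℕ) :
    Matrix (Fin m × Fin p) (Fin p) ℂ :=
  fun x b => if (x.1 : ℕ) = 0 then 0 else -Complex.I * Hk ((x.1 : ℕ) - 1) x.2 b

/-- Φ₂(m) = col(I_p, 0, ..., 0). -/
def Phi2 (p m : ℕ) : Matrix (Fin m × Fin p) (Fin p) ℂ :=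
  fun x b => if (x.1 : ℕ) = 0 ∧ x.2 = b then 1 else 0

/-- Π(m) = [Φ₁(m), Φ₂(m)]. -/
def Pmat (p : ℕ) (Hk : ℕ → Matrix (Fin p) (Fin p) ℂ) (m : ℕ) :
    Matrix (Fin m × Fin p) (Fin p ⊕ Fin p) ℂ :=
  Matrix.fromCols (Phi1 p Hk m) (Phi2 p m)

/-- The block row P₂ = [0, ..., 0, I_p] ∈ ℂ^{p×mp}. -/
def P2 (p m : ℕ) : Matrix (Fin p) (Fin m × Fin p) ℂ :=
  fun a y => if (y.1 : ℕ) = m - 1 ∧ a = y.2 then 1 else 0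

/-- The Verblunsky-type coefficients ω_k = P₂ T(k+1) Π(k+1) of a block Hankel matrix. -/
def omegaV (p : ℕ) (Hk : ℕ → Matrix (Fin p) (Fin p) ℂ) (k : ℕ) :
    Matrix (Fin p) (Fin p ⊕ Fin p) ℂ :=
  P2 p (k + 1) * (Hmat p Hk (k + 1))⁻¹ * Pmat p Hk (k + 1)

namespace Matrix

variable {K m r q : Type*} [Field K] [StarRing K] [Fintype m] [DecidableEq m] [Fintype r]

theorem isotropic_of_displacement_eq {A H : Matrix m m K} {G : Matrix m r K} {J : Matrix r r K}
    {P : Matrix q m K} {c : K} (hH : H.IsHermitian) (hdet : IsUnit H.det) (hc : c ≠ 0)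
    (hdisp : A * H - H * Aᴴ = c • (G * J * Gᴴ)) (hAP : A * Pᴴ = 0) :
    P * H⁻¹ * G * J * (P * H⁻¹ * G)ᴴ = 0 := by
  have hPA : P * Aᴴ = 0 := by simpa using congrArg conjTranspose hAP
  have key : P * H⁻¹ * (A * H - H * Aᴴ) * H⁻¹ * Pᴴ = 0 := by
    calc P * H⁻¹ * (A * H - H * Aᴴ) * H⁻¹ * Pᴴ
        = P * H⁻¹ * A * (H * H⁻¹) * Pᴴ - P * (H⁻¹ * H) * Aᴴ * H⁻¹ * Pᴴ := by
          simp only [Matrix.mul_sub, Matrix.sub_mul, Matrix.mul_assoc]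
      _ = 0 := by
          rw [mul_nonsing_inv H hdet, nonsing_inv_mul H hdet, Matrix.mul_one, Matrix.mul_one,
            Matrix.mul_assoc _ A, hAP, hPA]
          simp
  rw [hdisp] at key
  rw [conjTranspose_mul, conjTranspose_mul, hH.inv]
  simpa only [Matrix.mul_smul, Matrix.smul_mul, Matrix.mul_assoc, smul_eq_zero, hc, false_or]
    using key

end Matrix

section Hankel

variable {p : ℕ} {Hk : ℕ → Matrix (Fin p) (Fin p) ℂ}

theorem Amat_mul_apply {m : ℕ} {q : Type*} (M : Matrix (Fin m × Fin p) q ℂ) (i : Fin m)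
    (a : Fin p) (y : q) :
    (Amat p m * M) (i, a) y = if h : (i : ℕ) = 0 then 0 else M (⟨i - 1, by omega⟩, a) y := by
  simp only [mul_apply, Amat, ite_mul, one_mul, zero_mul, Fintype.sum_prod_type]
  split_ifs with h
  · simp [h]
  · rw [Finset.sum_eq_single ⟨i - 1, by omega⟩]
    · simp [show (i : ℕ) - 1 + 1 = i by omega]
    · intro j _ hj
      have : (i : ℕ) ≠ j + 1 := fun hij => hj (Fin.ext (by simp; omega))
      simp [this]
    · simp

theorem Amat_mul_P2_conjTranspose (m : ℕ) : Amat p m * (P2 p m)ᴴ = 0 := by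
  ext ⟨i, a⟩ b
  rw [Amat_mul_apply]
  split_ifs with hi
  · rfl
  · have : (i : ℕ) - 1 ≠ m - 1 := by omega
    simp [P2, this]

theorem Amat_mul_Hmat_apply {m : ℕ} (x y : Fin m × Fin p) :
    (Amat p m * Hmat p Hk m) x y = if (x.1 : ℕ) = 0 then 0 else Hk (x.1 - 1 + y.1) x.2 y.2 := by
  rw [Amat_mul_apply]; rfl

theorem isHermitian_Hmat (hHk : ∀ k, (Hk k).IsHermitian) (m : ℕ) : (Hmat p Hk m).IsHermitian := by
  ext x y
  simp [Hmat, fun k a b => (hHk k).apply b a, Nat.add_comm]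

theorem Hmat_mul_Amat_conjTranspose_apply (hHk : ∀ k, (Hk k).IsHermitian) {m : ℕ}
    (x y : Fin m × Fin p) :
    (Hmat p Hk m * (Amat p m)ᴴ) x y
      = if (y.1 : ℕ) = 0 then 0 else Hk (y.1 - 1 + x.1) x.2 y.2 := by
  conv_lhs => rw [← (isHermitian_Hmat hHk m).eq, ← conjTranspose_mul]
  rw [conjTranspose_apply, Amat_mul_Hmat_apply]
  split_ifs <;> simp [fun k a b => (hHk k).apply b a]

theorem mul_Phi2_conjTranspose_apply {m : ℕ} {q : Type*} (M : Matrix q (Fin p) ℂ)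
    (x : q) (y : Fin m × Fin p) :
    (M * (Phi2 p m)ᴴ) x y = if (y.1 : ℕ) = 0 then M x y.2 else 0 := by
  simp only [mul_apply, Phi2, conjTranspose_apply]
  split_ifs with hy <;> simp [hy]

theorem Pmat_mul_Jmat_mul_conjTranspose (m : ℕ) :
    Pmat p Hk m * Jmat p * (Pmat p Hk m)ᴴ
      = Phi1 p Hk m * (Phi2 p m)ᴴ + (Phi1 p Hk m * (Phi2 p m)ᴴ)ᴴ := by
  rw [Pmat, Jmat, fromCols_mul_fromBlocks, conjTranspose_fromCols_eq_fromRows_conjTranspose,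
    fromCols_mul_fromRows, conjTranspose_mul, conjTranspose_conjTranspose]
  simp only [Matrix.mul_zero, Matrix.mul_one, add_zero, add_comm]

theorem Amat_mul_Hmat_sub_Hmat_mul_Amat_conjTranspose (hHk : ∀ k, (Hk k).IsHermitian) (m : ℕ) :
    Amat p m * Hmat p Hk m - Hmat p Hk m * (Amat p m)ᴴ
      = Complex.I • (Pmat p Hk m * Jmat p * (Pmat p Hk m)ᴴ) := by
  rw [Pmat_mul_Jmat_mul_conjTranspose]
  ext ⟨i, a⟩ ⟨j, b⟩
  simp only [Matrix.sub_apply, Matrix.smul_apply, Matrix.add_apply, conjTranspose_apply,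
    Amat_mul_Hmat_apply, Hmat_mul_Amat_conjTranspose_apply hHk, mul_Phi2_conjTranspose_apply, Phi1]
  by_cases hi : (i : ℕ) = 0 <;> by_cases hj : (j : ℕ) = 0
  · simp [hi, hj]
  · simp [hi, hj, fun k a b => (hHk k).apply b a, ← mul_assoc]
  · simp [hi, hj, ← mul_assoc]
  · simp [hi, hj, show (i : ℕ) - 1 + j = j - 1 + i by omega]

theorem posDef_Hmat_of_le {m n : ℕ} (hpos : (Hmat p Hk n).PosDef) (hmn : m ≤ n) :
    (Hmat p Hk m).PosDef :=
  hpos.submatrix (e := Prod.map (Fin.castLE hmn) id)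
    ((Fin.castLE_injective hmn).prodMap Function.injective_id)

end Hankel

/-- for a positive definite block Hankel matrix H(n), the
Verblunsky-type coefficients satisfy ω_k J ω_k* = 0 for 0 < k < n. -/
theorem verblunsky_isotropy (n p : ℕ)
    (Hk : ℕ → Matrix (Fin p) (Fin p) ℂ)
    (hself : ∀ k, (Hk k)ᴴ = Hk k)
    (hpos : (Hmat p Hk n).PosDef) :
    ∀ k, 0 < k → k < n →
      omegaV p Hk k * Jmat p * (omegaV p Hk k)ᴴ = 0 := by
  intro k _ hkn
  have hpd : (Hmat p Hk (k + 1)).PosDef := posDef_Hmat_of_le hpos hkn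
  exact isotropic_of_displacement_eq hpd.isHermitian
    ((isUnit_iff_isUnit_det _).mp hpd.isUnit) Complex.I_ne_zero
    (Amat_mul_Hmat_sub_Hmat_mul_Amat_conjTranspose hself _) (Amat_mul_P2_conjTranspose _)
end
end

section
/- Suppose ω_{r-1}, ω_r, ω̃_r ∈ C^{p×2p} satisfy: ω_r J ω_r* = 0, ω̃_r J ω̃_r* = 0, ω̃_r J ω_r* = 0, and i ω_r J ω_{r-1}* = i ω̃_r J ω_{r-1}* = t with t ∈ C^{p×p} invertible, where J = [[0,I_p],[I_p,0]]. Then the 2p×2p matrix K := [ω_r J; -i ω_{r-1} J] satisfies K J K* = [[0,t],[t*,0]], K is invertible, K ω_r* = K ω̃_r* = [0; t], and consequently ω̃_r = ω_r. -/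
/-! With the form ⟨a, b⟩ = a J b*, the blocks of K J K* are the forms of ω_r and ω_{r-1}, so
K J K* = [[0, t], [t*, 0]] is invertible and hence so is K. The rows of K ω* are ⟨ω_r, ω⟩ and
-i ⟨ω_{r-1}, ω⟩, which the hypotheses pin down to [0; t] for both ω = ω_r and ω = ω̃_r;
cancelling K gives ω̃_r = ω_r. -/

open Matrix
open scoped ComplexOrder

noncomputable section

theorem Jmat_conjTranspose (p : ℕ) : (Jmat p)ᴴ = Jmat p := by
  simp [Jmat, fromBlocks_conjTranspose]

theorem Jmat_mul_self (p : ℕ) : Jmat p * Jmat p = 1 := by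
  simp [Jmat, fromBlocks_multiply, ← fromBlocks_one]

namespace Matrix

theorem isUnit_det_fromBlocks_zero_zero {α n : Type*} [CommRing α] [Fintype n] [DecidableEq n]
    {A B : Matrix n n α} (hA : IsUnit A.det) (hB : IsUnit B.det) :
    IsUnit (fromBlocks 0 A B 0).det := by
  refine isUnit_det_of_right_inverse (B := fromBlocks 0 B⁻¹ A⁻¹ 0) ?_
  simp [fromBlocks_multiply, mul_nonsing_inv _ hA, mul_nonsing_inv _ hB, ← fromBlocks_one]

variable {α l m n : Type*} [CommRing α] [StarRing α] [Fintype n] {J : Matrix n n α}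

theorem conjTranspose_mul_mul_conjTranspose (hJ : Jᴴ = J) (a : Matrix l n α)
    (b : Matrix m n α) : (a * J * bᴴ)ᴴ = b * J * aᴴ := by
  rw [conjTranspose_mul, conjTranspose_mul, conjTranspose_conjTranspose, hJ, Matrix.mul_assoc]

theorem fromRows_mul_mul_conjTranspose_fromRows [DecidableEq n] (hJ : Jᴴ = J)
    (hJJ : J * J = 1) (a : Matrix l n α) (b : Matrix m n α) (c : α) :
    fromRows (a * J) (c • (b * J)) * J * (fromRows (a * J) (c • (b * J)))ᴴ =
      fromBlocks (a * J * aᴴ) (star c • (a * J * bᴴ))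
        (c • (b * J * aᴴ)) ((star c * c) • (b * J * bᴴ)) := by
  rw [fromRows_mul, Matrix.smul_mul, Matrix.mul_assoc a, Matrix.mul_assoc b, hJJ,
    Matrix.mul_one, Matrix.mul_one, conjTranspose_fromRows_eq_fromCols_conjTranspose,
    fromRows_mul_fromCols]
  simp only [conjTranspose_smul, conjTranspose_mul, hJ, Matrix.smul_mul, Matrix.mul_smul,
    smul_smul, Matrix.mul_assoc]

end Matrix

theorem last_verblunsky_coefficient_unique_general (p : ℕ)
    (ωprev ωr ωtil : Matrix (Fin p) (Fin p ⊕ Fin p) ℂ)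
    (t : Matrix (Fin p) (Fin p) ℂ)
    (ht : IsUnit t.det) (hherm : tᴴ = t)
    (hprev : ωprev * Jmat p * ωprevᴴ = 0)
    (h1 : ωr * Jmat p * ωrᴴ = 0)
    (h3 : ωtil * Jmat p * ωrᴴ = 0)
    (h4 : Complex.I • (ωr * Jmat p * ωprevᴴ) = t)
    (h5 : Complex.I • (ωtil * Jmat p * ωprevᴴ) = t) :
    Matrix.fromRows (ωr * Jmat p) ((-Complex.I) • (ωprev * Jmat p)) * Jmat p *
        (Matrix.fromRows (ωr * Jmat p) ((-Complex.I) • (ωprev * Jmat p)))ᴴ =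
      Matrix.fromBlocks 0 t tᴴ 0 ∧
    IsUnit (Matrix.fromRows (ωr * Jmat p) ((-Complex.I) • (ωprev * Jmat p))).det ∧
    Matrix.fromRows (ωr * Jmat p) ((-Complex.I) • (ωprev * Jmat p)) * ωrᴴ =
      Matrix.fromRows (0 : Matrix (Fin p) (Fin p) ℂ) t ∧
    Matrix.fromRows (ωr * Jmat p) ((-Complex.I) • (ωprev * Jmat p)) * ωtilᴴ =
      Matrix.fromRows (0 : Matrix (Fin p) (Fin p) ℂ) t ∧
    ωtil = ωr := by
  set K := Matrix.fromRows (ωr * Jmat p) ((-Complex.I) • (ωprev * Jmat p))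
  have hJ := Jmat_conjTranspose p
  have adjoint_form : ∀ ω : Matrix (Fin p) (Fin p ⊕ Fin p) ℂ, Complex.I • (ω * Jmat p * ωprevᴴ) = t →
      (-Complex.I) • (ωprev * Jmat p * ωᴴ) = t := fun ω h => by
    simpa [hherm, conjTranspose_mul_mul_conjTranspose hJ] using congrArg conjTranspose h
  have hKJK : K * Jmat p * Kᴴ = fromBlocks 0 t tᴴ 0 := by
    rw [fromRows_mul_mul_conjTranspose_fromRows hJ (Jmat_mul_self p), h1, hprev,
      adjoint_form ωr h4, hherm]
    simpa using h4
  have hK : IsUnit K.det := by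
    have h := isUnit_det_fromBlocks_zero_zero (B := tᴴ) ht
      (by rw [det_conjTranspose]; exact ht.star)
    rw [← hKJK, det_mul, det_mul] at h
    exact isUnit_of_mul_isUnit_left (isUnit_of_mul_isUnit_left h)
  have hKr : K * ωrᴴ = fromRows 0 t := by
    rw [fromRows_mul, smul_mul, h1, adjoint_form ωr h4]
  have hKtil : K * ωtilᴴ = fromRows 0 t := by
    rw [fromRows_mul, smul_mul, ← conjTranspose_mul_mul_conjTranspose hJ, h3,
      conjTranspose_zero, adjoint_form ωtil h5]
  refine ⟨hKJK, hK, hKr, hKtil, ?_⟩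
  rw [← conjTranspose_inj, ← nonsing_inv_mul_cancel_left K ωtilᴴ hK, hKtil, ← hKr,
    nonsing_inv_mul_cancel_left K ωrᴴ hK]

/-- uniqueness of the last Verblunsky-type coefficient. With
K = [ω_r J; -i ω_{r-1} J], one gets K J K* = [[0,t],[t*,0]], K invertible,
K ω_r* = K ω̃_r* = [0; t], and hence ω̃_r = ω_r. -/
theorem last_verblunsky_coefficient_unique (p : ℕ)
    (ωprev ωr ωtil : Matrix (Fin p) (Fin p ⊕ Fin p) ℂ)
    (t : Matrix (Fin p) (Fin p) ℂ)
    (ht : IsUnit t.det) (hherm : tᴴ = t)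
    (hprev : ωprev * Jmat p * ωprevᴴ = 0)
    (h1 : ωr * Jmat p * ωrᴴ = 0)
    (h2 : ωtil * Jmat p * ωtilᴴ = 0)
    (h3 : ωtil * Jmat p * ωrᴴ = 0)
    (h4 : Complex.I • (ωr * Jmat p * ωprevᴴ) = t)
    (h5 : Complex.I • (ωtil * Jmat p * ωprevᴴ) = t) :
    Matrix.fromRows (ωr * Jmat p) ((-Complex.I) • (ωprev * Jmat p)) * Jmat p *
        (Matrix.fromRows (ωr * Jmat p) ((-Complex.I) • (ωprev * Jmat p)))ᴴ =
      Matrix.fromBlocks 0 t tᴴ 0 ∧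
    IsUnit (Matrix.fromRows (ωr * Jmat p) ((-Complex.I) • (ωprev * Jmat p))).det ∧
    Matrix.fromRows (ωr * Jmat p) ((-Complex.I) • (ωprev * Jmat p)) * ωrᴴ =
      Matrix.fromRows (0 : Matrix (Fin p) (Fin p) ℂ) t ∧
    Matrix.fromRows (ωr * Jmat p) ((-Complex.I) • (ωprev * Jmat p)) * ωtilᴴ =
      Matrix.fromRows (0 : Matrix (Fin p) (Fin p) ℂ) t ∧
    ωtil = ωr :=
  last_verblunsky_coefficient_unique_general p ωprev ωr ωtil t ht hherm hprev h1 h3 h4 h5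
end
end
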